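/- arXiv:1909.08435 — 2 statements merged into one kernel-verified Lean document; each statement's English description precedes it below -/
import Mathlib

section
/- Let ε be a real number with 0 < ε < 1/2 and let ρ be a real number with 0 ≤ ρ < 1 such that (ρ + (1 − ρ)²)/(1 + (1 − ρ)²) ≤ 1 − ε. Then (ρ + (1 − ρ)²)/(1 + (1 − ρ)²) − ρ ≥ (1 − 2ε² − √(1 − 4ε²))/(2ε). That is, as long as one application of the ratio-improvement function does not exceed 1 − ε, each application improves the ratio by at least (1 − 2ε² − √(1 − 4ε²))/(2ε). -/
/-!
Write `t = 1 - ρ`. The improvement is `t³/(1 + t²)`, and the hypothesis says `t/(1 + t²) ≥ ε`,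
i.e. `ε t² - t + ε ≤ 0`, so `t` lies above the smaller root `t₀ = (1 - √(1 - 4ε²))/(2ε)` of this
quadratic. The hypothesis also gives `t³/(1 + t²) ≥ ε t² ≥ ε t₀²`, and since `t₀` is a root,
`ε t₀² = t₀ - ε`, which is the claimed bound.
-/

open Real

/-- The smaller root of `ε t² - t + ε`. -/
noncomputable def smallerRoot (ε : ℝ) : ℝ := (1 - √(1 - 4 * ε ^ 2)) / (2 * ε)

lemma sub_div_one_add_sq_sub_self (ρ : ℝ) :
    (ρ + (1 - ρ) ^ 2) / (1 + (1 - ρ) ^ 2) - ρ = (1 - ρ) ^ 3 / (1 + (1 - ρ) ^ 2) := by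
  field_simp
  ring

lemma div_one_add_sq_le_one_sub_iff (ε ρ : ℝ) :
    (ρ + (1 - ρ) ^ 2) / (1 + (1 - ρ) ^ 2) ≤ 1 - ε ↔ ε * (1 + (1 - ρ) ^ 2) ≤ 1 - ρ := by
  rw [div_le_iff₀ (by positivity)]
  constructor <;> intro h <;> linarith

lemma mul_sq_le_pow_three_div {ε t : ℝ} (h : ε * (1 + t ^ 2) ≤ t) :
    ε * t ^ 2 ≤ t ^ 3 / (1 + t ^ 2) := by
  rw [le_div_iff₀ (by positivity)]
  nlinarith [mul_le_mul_of_nonneg_left h (sq_nonneg t)]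

section smallerRoot

variable {ε t : ℝ}

lemma sq_two_mul_sub_one_le (hε : 0 < ε) (h : ε * (1 + t ^ 2) ≤ t) :
    (2 * ε * t - 1) ^ 2 ≤ 1 - 4 * ε ^ 2 := by
  nlinarith

lemma smallerRoot_le (hε : 0 < ε) (h : ε * (1 + t ^ 2) ≤ t) : smallerRoot ε ≤ t := by
  have hsq := sq_two_mul_sub_one_le hε h
  have habs : |2 * ε * t - 1| ≤ √(1 - 4 * ε ^ 2) := Real.abs_le_sqrt hsq
  rw [smallerRoot, div_le_iff₀ (by positivity)]
  linarith [neg_abs_le (2 * ε * t - 1)]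

lemma smallerRoot_nonneg (hε : 0 < ε) : 0 ≤ smallerRoot ε := by
  have : √(1 - 4 * ε ^ 2) ≤ 1 := Real.sqrt_le_one.mpr (by nlinarith)
  exact div_nonneg (by linarith) (by positivity)

lemma mul_smallerRoot_sq (hε : 0 < ε) (h : 4 * ε ^ 2 ≤ 1) :
    ε * smallerRoot ε ^ 2 = (1 - 2 * ε ^ 2 - √(1 - 4 * ε ^ 2)) / (2 * ε) := by
  have hs : √(1 - 4 * ε ^ 2) ^ 2 = 1 - 4 * ε ^ 2 := Real.sq_sqrt (by linarith)
  rw [smallerRoot]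
  generalize √(1 - 4 * ε ^ 2) = s at hs ⊢
  field_simp
  linear_combination hs

end smallerRoot

theorem stmt_12_general (ε : ℝ) (hε0 : 0 < ε)
    (ρ : ℝ)
    (h : (ρ + (1 - ρ) ^ 2) / (1 + (1 - ρ) ^ 2) ≤ 1 - ε) :
    (1 - 2 * ε ^ 2 - Real.sqrt (1 - 4 * ε ^ 2)) / (2 * ε) ≤
      (ρ + (1 - ρ) ^ 2) / (1 + (1 - ρ) ^ 2) - ρ := by
  have hquad := (div_one_add_sq_le_one_sub_iff ε ρ).mp h
  have hε1 : 4 * ε ^ 2 ≤ 1 := by nlinarith [sq_two_mul_sub_one_le hε0 hquad]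
  calc (1 - 2 * ε ^ 2 - √(1 - 4 * ε ^ 2)) / (2 * ε)
      = ε * smallerRoot ε ^ 2 := (mul_smallerRoot_sq hε0 hε1).symm
    _ ≤ ε * (1 - ρ) ^ 2 := by
        gcongr
        exacts [smallerRoot_nonneg hε0, smallerRoot_le hε0 hquad]
    _ ≤ (1 - ρ) ^ 3 / (1 + (1 - ρ) ^ 2) := mul_sq_le_pow_three_div hquad
    _ = _ := (sub_div_one_add_sq_sub_self ρ).symm

/-- As long as one application of the ratio-improvement function does not exceed
`1 − ε`, each application improves the ratio by at least
`(1 − 2ε² − √(1 − 4ε²))/(2ε)`. -/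
theorem stmt_12 (ε : ℝ) (hε0 : 0 < ε) (hε1 : ε < 1 / 2)
    (ρ : ℝ) (h0 : 0 ≤ ρ) (h1 : ρ < 1)
    (h : (ρ + (1 - ρ) ^ 2) / (1 + (1 - ρ) ^ 2) ≤ 1 - ε) :
    (1 - 2 * ε ^ 2 - Real.sqrt (1 - 4 * ε ^ 2)) / (2 * ε) ≤
      (ρ + (1 - ρ) ^ 2) / (1 + (1 - ρ) ^ 2) - ρ :=
  stmt_12_general ε hε0 ρ h
end

section
/- Let ρ₀ be a real number with 0 ≤ ρ₀ < 1 and define the sequence (ρ_n) by ρ_{n+1} = (ρ_n + (1 − ρ_n)²)/(1 + (1 − ρ_n)²). Then the sequence (ρ_n) is strictly increasing, satisfies ρ_n < 1 for all n, and converges to 1. -/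
/-- Iterating the ratio-improvement function from any `ρ₀ ∈ [0, 1)` produces a
strictly increasing sequence, bounded above by `1`, converging to `1`. -/
theorem stmt_13 (ρ₀ : ℝ) (h0 : 0 ≤ ρ₀) (h1 : ρ₀ < 1)
    (ρ : ℕ → ℝ) (hinit : ρ 0 = ρ₀)
    (hstep : ∀ n, ρ (n + 1) = (ρ n + (1 - ρ n) ^ 2) / (1 + (1 - ρ n) ^ 2)) :
    StrictMono ρ ∧ (∀ n, ρ n < 1) ∧ Filter.Tendsto ρ Filter.atTop (nhds 1) := by
  have hden : ∀ x : ℝ, (0:ℝ) < 1 + (1 - x) ^ 2 := fun x => by positivity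
  have hlt : ∀ n, ρ n < 1 := by
    intro n
    induction n with
    | zero => rw [hinit]; exact h1
    | succ n ih =>
      rw [hstep n]
      rw [div_lt_one (hden (ρ n))]
      nlinarith [sq_nonneg (1 - ρ n)]
  have hmono : StrictMono ρ := by
    apply strictMono_nat_of_lt_succ
    intro n
    rw [hstep n]
    rw [lt_div_iff₀ (hden (ρ n))]
    have hp := sub_pos.mpr (hlt n)
    nlinarith [pow_pos hp 3]
  refine ⟨hmono, hlt, ?_⟩
  rcases tendsto_of_monotone hmono.monotone with h | ⟨L, hL⟩
  · exfalso
    obtain ⟨n, hn⟩ := (h.eventually_gt_atTop 1).exists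
    exact absurd (hlt n) (not_lt.mpr hn.le)
  · have hshift : Filter.Tendsto (fun n => ρ (n + 1)) Filter.atTop (nhds L) :=
      hL.comp (Filter.tendsto_add_atTop_nat 1)
    have hf : Filter.Tendsto (fun n => (ρ n + (1 - ρ n) ^ 2) / (1 + (1 - ρ n) ^ 2))
        Filter.atTop (nhds ((L + (1 - L) ^ 2) / (1 + (1 - L) ^ 2))) := by
      apply Filter.Tendsto.div
      · exact hL.add (((tendsto_const_nhds.sub hL).pow 2))
      · exact tendsto_const_nhds.add ((tendsto_const_nhds.sub hL).pow 2)
      · exact ne_of_gt (hden L)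
    have heq : L = (L + (1 - L) ^ 2) / (1 + (1 - L) ^ 2) := by
      apply tendsto_nhds_unique hshift
      simpa only [hstep] using hf
    have hLne : 1 + (1 - L) ^ 2 ≠ 0 := ne_of_gt (hden L)
    have : (1 - L) ^ 3 = 0 := by
      field_simp at heq
      nlinarith [heq]
    have hL1 : L = 1 := by
      have := pow_eq_zero_iff (n := 3) (by norm_num) |>.mp this
      linarith
    rwa [hL1] at hL
end
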